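/- arXiv:1502.06245 — 4 statements merged into one kernel-verified Lean document; each statement's English description precedes it below -/
import Mathlib

section
/- Let H be an induced-hereditary graph property closed under union with K₁. For every graph G and every edge e of G: γ_H(G_e) < γ_H(G) if and only if γ_H(G − e) < γ_H(G). (That is, e is γ_H-S⁻-critical if and only if e is γ_H-ER⁻-critical.) -/
/-!
Write `D = G - e` for `e = uv` and let `x` be the vertex subdividing `e`. Away from `x`, `G_e`
is `D`. So a dominating `P`-set of `D` containing `u` and `v` also dominates `G_e`, while one
missing `u` or `v` induces the same graph in `G` and dominates `G`; this gives `⇐`.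
For `⇒`, let `S` be a minimum dominating `P`-set of `G_e` and `T = S ∩ V`. If `x ∉ S`, `T` serves
for `D`. If `x ∈ S`, then `T` dominates `D` except possibly at `u` and `v`. When one end is
dominated, adding the other (isolated from `T`, so closure under `K₁` applies) gives a set for
`D` of size at most `|S|`. When neither is, `T ∪ {u}` is a dominating `P`-set of `G` of size `|S|`,
which is impossible.
-/

open SimpleGraph

/-- A graph property: a class of finite simple graphs on arbitrary vertex types. -/
abbrev GraphProp := ∀ (V : Type), SimpleGraph V → Prop

/-- Closure under graph isomorphism. -/
def IsoClosed (P : GraphProp) : Prop :=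
  ∀ (V W : Type) (G : SimpleGraph V) (H : SimpleGraph W), Nonempty (G ≃g H) → P V G → P W H

/-- A property is nondegenerate if it contains all edgeless graphs. -/
def Nondegenerate (P : GraphProp) : Prop :=
  IsoClosed P ∧ ∀ (V : Type), P V ⊥

/-- Closed under induced subgraphs. -/
def InducedHereditary (P : GraphProp) : Prop :=
  IsoClosed P ∧ ∀ (V : Type) (G : SimpleGraph V) (s : Set V), P V G → P s (G.induce s)

/-- Closed under all subgraphs. -/
def Hereditary (P : GraphProp) : Prop :=
  InducedHereditary P ∧ ∀ (V : Type) (G G' : SimpleGraph V), G' ≤ G → P V G → P V G'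

/-- The graph `G` together with one new isolated vertex. -/
def addK1 {V : Type} (G : SimpleGraph V) : SimpleGraph (V ⊕ Unit) where
  Adj a b := ∃ x y, a = Sum.inl x ∧ b = Sum.inl y ∧ G.Adj x y
  symm := by constructor; rintro a b ⟨x, y, rfl, rfl, h⟩; exact ⟨y, x, rfl, rfl, h.symm⟩
  loopless := by constructor; rintro a ⟨x, y, rfl, hy, h⟩; simp only [Sum.inl.injEq] at hy; subst hy; exact G.loopless.irrefl _ h

/-- Closure under disjoint union with `K₁`. -/
def ClosedUnderK1 (P : GraphProp) : Prop :=
  ∀ (V : Type) (G : SimpleGraph V), P V G → P (V ⊕ Unit) (addK1 G)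

/-- `S` is a dominating set of `G`. -/
def IsDominating {V : Type} (G : SimpleGraph V) (S : Set V) : Prop :=
  ∀ v ∉ S, ∃ u ∈ S, G.Adj u v

/-- `S` is a dominating set inducing a subgraph with property `P`. -/
def IsDomPSet (P : GraphProp) {V : Type} (G : SimpleGraph V) (S : Set V) : Prop :=
  IsDominating G S ∧ P S (G.induce S)

/-- The domination number with respect to the property `P`. -/
noncomputable def gammaP (P : GraphProp) {V : Type} [Fintype V] (G : SimpleGraph V) : ℕ :=
  sInf (Set.ncard '' {S : Set V | IsDomPSet P G S})

/-- A minimum dominating `P`-set. -/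
def IsGammaSet (P : GraphProp) {V : Type} [Fintype V] (G : SimpleGraph V) (S : Set V) : Prop :=
  IsDomPSet P G S ∧ S.ncard = gammaP P G

/-- The ordinary domination number. -/
noncomputable def gamma {V : Type} [Fintype V] (G : SimpleGraph V) : ℕ :=
  sInf (Set.ncard '' {S : Set V | IsDominating G S})

/-- The graph obtained from `G` by deleting the edge `uv` and replacing it by the
path `u - x₀ - x₁ - ⋯ - x_{t-1} - v` through `t` new vertices. -/
def subdiv {V : Type} (G : SimpleGraph V) (u v : V) (t : ℕ) : SimpleGraph (V ⊕ Fin t) where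
  Adj a b := match a, b with
    | Sum.inl a, Sum.inl b => G.Adj a b ∧ ¬((a = u ∧ b = v) ∨ (a = v ∧ b = u))
    | Sum.inl a, Sum.inr i => (a = u ∧ (i : ℕ) = 0) ∨ (a = v ∧ (i : ℕ) + 1 = t)
    | Sum.inr i, Sum.inl a => (a = u ∧ (i : ℕ) = 0) ∨ (a = v ∧ (i : ℕ) + 1 = t)
    | Sum.inr i, Sum.inr j => (i : ℕ) + 1 = (j : ℕ) ∨ (j : ℕ) + 1 = (i : ℕ)
  symm := by
    constructor
    rintro (a | i) (b | j) h
    · exact ⟨h.1.symm, fun hc => h.2 (by tauto)⟩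
    · exact h
    · exact h
    · tauto
  loopless := by
    constructor
    rintro (a | i) h
    · exact G.loopless.irrefl a h.1
    · omega

/-- The private neighbour set `pn_G[x, X] = {y : N[y,G] ∩ X = {x}}`. -/
def pn {V : Type} (G : SimpleGraph V) (X : Set V) (x : V) : Set V :=
  {y | insert y (G.neighborSet y) ∩ X = {x}}

/-- The graph `G` with the vertex `v` deleted. -/
abbrev delVert {V : Type} (G : SimpleGraph V) (v : V) : SimpleGraph {w : V // w ≠ v} :=
  G.induce {w : V | w ≠ v}

/-- An independent set. -/
def IsIndep {V : Type} (G : SimpleGraph V) (S : Set V) : Prop :=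
  S.Pairwise fun a b => ¬ G.Adj a b

section

variable {P : GraphProp}

lemma addK1_bot {α : Type} : addK1 (⊥ : SimpleGraph α) = ⊥ := by
  ext a b
  simp [addK1]

lemma IsoClosed.bot_of_equiv (hP : IsoClosed P) {α β : Type} (e : α ≃ β) (h : P α ⊥) : P β ⊥ :=
  hP _ _ _ _ ⟨⟨e, by simp⟩⟩ h

namespace InducedHereditary

lemma bot_of_mem (h1 : InducedHereditary P) (h2 : ClosedUnderK1 P) {W : Type}
    {G₀ : SimpleGraph W} (hG₀ : P W G₀) (α : Type) [Finite α] : P α ⊥ := by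
  refine Finite.induction_empty_option (fun e h => h1.1.bot_of_equiv e h) ?_ ?_ α
  · exact h1.1 _ _ _ _ ⟨⟨Equiv.equivOfIsEmpty _ _, fun {a} => isEmptyElim a⟩⟩ (h1.2 W G₀ ∅ hG₀)
  · intro β _ hβ
    have h := h2 β ⊥ hβ
    rw [addK1_bot] at h
    exact h1.1.bot_of_equiv (Equiv.optionEquivSumPUnit β).symm h

lemma induce_of_subset (h1 : InducedHereditary P) {V : Type} {G : SimpleGraph V}
    {S T : Set V} (hTS : T ⊆ S) (hS : P S (G.induce S)) : P T (G.induce T) :=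
  h1.1 _ _ _ _ ⟨⟨⟨fun y => ⟨y.1.1, y.2⟩, fun t => ⟨⟨t, hTS t.2⟩, t.2⟩, fun _ => rfl, fun _ => rfl⟩,
    Iff.rfl⟩⟩ (h1.2 S (G.induce S) {y | y.1 ∈ T} hS)

lemma induce_insert (h1 : InducedHereditary P) (h2 : ClosedUnderK1 P) {V : Type}
    {G : SimpleGraph V} {T : Set V} {w : V} (hw : w ∉ T) (hadj : ∀ a ∈ T, ¬ G.Adj w a)
    (hT : P T (G.induce T)) : P (insert w T : Set V) (G.induce (insert w T)) := by
  classical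
  refine h1.1 _ _ _ _ ⟨⟨(Equiv.Set.insert hw).symm, ?_⟩⟩ (h2 _ _ hT)
  rintro (a | ⟨⟩) (b | ⟨⟩)
  · simp [addK1]
  · simpa [addK1] using fun h => hadj _ a.2 h.symm
  · simpa [addK1] using hadj _ b.2
  · simp [addK1]

end InducedHereditary

lemma IsDominating.of_maximal_isIndepSet {V : Type} {G : SimpleGraph V} {S : Set V}
    (hS : Maximal G.IsIndepSet S) : IsDominating G S := by
  intro w hw
  by_contra! hnadj
  exact hw (hS.2 (hS.1.insert fun a ha _ => ⟨fun h => hnadj a ha h.symm, hnadj a ha⟩)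
    (Set.subset_insert w S) (Set.mem_insert w S))

lemma IsDominating.mono {V : Type} {G H : SimpleGraph V} {S : Set V} (hGH : G ≤ H)
    (hS : IsDominating G S) : IsDominating H S := fun w hw =>
  let ⟨a, ha, hadj⟩ := hS w hw
  ⟨a, ha, hGH hadj⟩

lemma InducedHereditary.exists_isDomPSet (h1 : InducedHereditary P) (h2 : ClosedUnderK1 P)
    {W : Type} {G₀ : SimpleGraph W} (hG₀ : P W G₀) {V : Type} [Finite V] (G : SimpleGraph V) :
    ∃ S, IsDomPSet P G S := by
  obtain ⟨S, hS⟩ := (Set.toFinite {S : Set V | G.IsIndepSet S}).exists_maximal ⟨∅, by simp⟩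
  have hbot : G.induce S = ⊥ := by
    ext a b
    simpa using fun h => hS.1 a.2 b.2 (G.ne_of_adj h) h
  exact ⟨S, IsDominating.of_maximal_isIndepSet hS, hbot ▸ h1.bot_of_mem h2 hG₀ S⟩

section DominationNumber

variable {V : Type} [Fintype V] {G : SimpleGraph V}

lemma gammaP_le_ncard {S : Set V} (hS : IsDomPSet P G S) : gammaP P G ≤ S.ncard :=
  Nat.sInf_le ⟨S, hS, rfl⟩

lemma exists_isGammaSet (h : ∃ S, IsDomPSet P G S) : ∃ S, IsGammaSet P G S := by
  obtain ⟨S₀, hS₀⟩ := h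
  obtain ⟨S, hS, hcard⟩ :=
    Nat.sInf_mem (s := Set.ncard '' {S | IsDomPSet P G S}) ⟨S₀.ncard, S₀, hS₀, rfl⟩
  exact ⟨S, hS, hcard⟩

lemma exists_isDomPSet_of_gammaP_pos (h : 0 < gammaP P G) : ∃ S, IsDomPSet P G S := by
  by_contra! hc
  simp [gammaP, hc] at h

/-- `gammaP P H` is the junk value `sInf ∅ = 0` when `H` has no dominating `P`-set; a positive
`gammaP P G` makes `P` nonempty, which rules this out. -/
lemma InducedHereditary.exists_isGammaSet_of_gammaP_lt (h1 : InducedHereditary P)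
    (h2 : ClosedUnderK1 P) {W : Type} [Fintype W] {H : SimpleGraph W}
    (h : gammaP P H < gammaP P G) : ∃ S, IsGammaSet P H S := by
  obtain ⟨S, hS⟩ := exists_isDomPSet_of_gammaP_pos (h.trans_le' (Nat.zero_le _))
  exact exists_isGammaSet (h1.exists_isDomPSet h2 hS.2 H)

lemma gammaP_le_ncard_insert (h1 : InducedHereditary P) (h2 : ClosedUnderK1 P) {T : Set V}
    {w : V} (hT : P T (G.induce T)) (hw : w ∉ T) (hadj : ∀ a ∈ T, ¬ G.Adj w a)
    (hdom : IsDominating G (insert w T)) : gammaP P G ≤ T.ncard + 1 :=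
  (gammaP_le_ncard ⟨hdom, h1.induce_insert h2 hw hadj hT⟩).trans (Set.ncard_insert_le w T)

lemma gammaP_le_ncard_add_one (h1 : InducedHereditary P) (h2 : ClosedUnderK1 P) {T : Set V}
    {w : V} (hT : P T (G.induce T)) (hdom : ∀ y ∉ T, y ≠ w → ∃ a ∈ T, G.Adj a y) :
    gammaP P G ≤ T.ncard + 1 := by
  by_cases hw : w ∈ T ∨ ∃ a ∈ T, G.Adj a w
  · refine (gammaP_le_ncard ⟨fun y hy => ?_, hT⟩).trans (Nat.le_succ _)
    by_cases hyw : y = w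
    · exact hyw ▸ hw.resolve_left (hyw ▸ hy)
    · exact hdom y hy hyw
  · simp only [not_or, not_exists, not_and] at hw
    refine gammaP_le_ncard_insert h1 h2 hT hw.1 (fun a ha h => hw.2 a ha h.symm) fun y hy => ?_
    rw [Set.mem_insert_iff, not_or] at hy
    obtain ⟨a, ha, hadj⟩ := hdom y hy.2 hy.1
    exact ⟨a, Set.mem_insert_of_mem w ha, hadj⟩

end DominationNumber

section Subdivision

variable {V : Type} {G : SimpleGraph V} {u v : V}

lemma subdiv_one_adj_inl_inl {a b : V} :
    (subdiv G u v 1).Adj (Sum.inl a) (Sum.inl b) ↔ (G.deleteEdges {s(u, v)}).Adj a b := by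
  simp only [subdiv, deleteEdges_adj, Set.mem_singleton_iff, Sym2.eq_iff]

lemma subdiv_one_adj_inl_inr {a : V} {i : Fin 1} :
    (subdiv G u v 1).Adj (Sum.inl a) (Sum.inr i) ↔ a = u ∨ a = v := by
  simp [subdiv]

lemma deleteEdges_induce_eq {T : Set V} (hT : u ∉ T ∨ v ∉ T) :
    (G.deleteEdges {s(u, v)}).induce T = G.induce T := by
  ext ⟨a, ha⟩ ⟨b, hb⟩
  simp only [comap_adj, Function.Embedding.coe_subtype, deleteEdges_adj,
    Set.mem_singleton_iff, Sym2.eq_iff, and_iff_left_iff_imp]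
  rintro _ (⟨rfl, rfl⟩ | ⟨rfl, rfl⟩) <;> tauto

noncomputable def deleteEdgesInduceIsoSubdivInduce (T : Set V) :
    (G.deleteEdges {s(u, v)}).induce T ≃g (subdiv G u v 1).induce (Sum.inl '' T) where
  toEquiv := Equiv.Set.image Sum.inl T Sum.inl_injective
  map_rel_iff' := subdiv_one_adj_inl_inl

lemma IsDominating.deleteEdges_of_subdiv_one {S : Set (V ⊕ Fin 1)}
    (hS : IsDominating (subdiv G u v 1) S) {w : V} (hw : w ∉ Sum.inl ⁻¹' S) :
    (∃ a ∈ Sum.inl ⁻¹' S, (G.deleteEdges {s(u, v)}).Adj a w) ∨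
      (Sum.inr 0 ∈ S ∧ (w = u ∨ w = v)) := by
  obtain ⟨a | i, ha, hadj⟩ := hS _ hw
  · exact Or.inl ⟨a, ha, subdiv_one_adj_inl_inl.1 hadj⟩
  · exact Or.inr ⟨Fin.eq_zero i ▸ ha, subdiv_one_adj_inl_inr.1 hadj.symm⟩

end Subdivision

section EdgeCriticality

variable {V : Type} [Fintype V] {G : SimpleGraph V} {u v : V}

/-- `T ∪ {u}` is a dominating `P`-set of `G`: `u` dominates `v` along `e` and has no neighbour
in `T`. -/
lemma gammaP_le_ncard_add_one_of_not_dominated (h1 : InducedHereditary P) (h2 : ClosedUnderK1 P)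
    (he : G.Adj u v) {T : Set V} (hT : P T ((G.deleteEdges {s(u, v)}).induce T))
    (hdom : ∀ y ∉ T, y ≠ u → y ≠ v → ∃ a ∈ T, (G.deleteEdges {s(u, v)}).Adj a y)
    (huT : u ∉ T) (hu : ∀ a ∈ T, ¬ (G.deleteEdges {s(u, v)}).Adj a u) (hvT : v ∉ T) :
    gammaP P G ≤ T.ncard + 1 := by
  refine gammaP_le_ncard_insert h1 h2 (deleteEdges_induce_eq (Or.inl huT) ▸ hT) huT
    (fun a ha hadj => hu a ha ?_) fun y hy => ?_
  · refine deleteEdges_adj.2 ⟨hadj.symm, fun hau => ?_⟩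
    rcases Sym2.eq_iff.1 (Set.mem_singleton_iff.1 hau) with ⟨rfl, -⟩ | ⟨rfl, -⟩ <;> contradiction
  · rw [Set.mem_insert_iff, not_or] at hy
    by_cases hyv : y = v
    · exact ⟨u, Set.mem_insert u T, hyv ▸ he⟩
    · obtain ⟨a, ha, hadj⟩ := hdom y hy.2 hy.1 hyv
      exact ⟨a, Set.mem_insert_of_mem u ha, deleteEdges_le _ hadj⟩

lemma gammaP_deleteEdges_lt_of_gammaP_subdiv_lt (h1 : InducedHereditary P)
    (h2 : ClosedUnderK1 P) (he : G.Adj u v) (h : gammaP P (subdiv G u v 1) < gammaP P G) :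
    gammaP P (G.deleteEdges {s(u, v)}) < gammaP P G := by
  classical
  obtain ⟨S, ⟨hSdom, hSP⟩, hScard⟩ := h1.exists_isGammaSet_of_gammaP_lt h2 h
  set D := G.deleteEdges {s(u, v)}
  set T : Set V := Sum.inl ⁻¹' S
  have hTS : Sum.inl '' T ⊆ S := Set.image_preimage_subset _ _
  have hT : P T (D.induce T) :=
    h1.1 _ _ _ _ ⟨(deleteEdgesInduceIsoSubdivInduce T).symm⟩ (h1.induce_of_subset hTS hSP)
  have hTcard : ((Sum.inl : V → V ⊕ Fin 1) '' T).ncard = T.ncard :=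
    Set.ncard_image_of_injective _ Sum.inl_injective
  by_cases hx : Sum.inr 0 ∈ S
  · have hlt : T.ncard < S.ncard := hTcard ▸ Set.ncard_lt_ncard
      ((Set.ssubset_iff_of_subset hTS).2 ⟨_, hx, by simp⟩) (Set.toFinite S)
    have hTdom : ∀ y ∉ T, y ≠ u → y ≠ v → ∃ a ∈ T, D.Adj a y := fun y hy hyu hyv =>
      (hSdom.deleteEdges_of_subdiv_one hy).resolve_right fun h => h.2.elim hyu hyv
    by_cases hu : u ∈ T ∨ ∃ a ∈ T, D.Adj a u
    · have := gammaP_le_ncard_add_one h1 h2 (w := v) hT fun y hy hyv =>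
        if hyu : y = u then hyu ▸ hu.resolve_left (hyu ▸ hy) else hTdom y hy hyu hyv
      omega
    by_cases hv : v ∈ T ∨ ∃ a ∈ T, D.Adj a v
    · have := gammaP_le_ncard_add_one h1 h2 (w := u) hT fun y hy hyu =>
        if hyv : y = v then hyv ▸ hv.resolve_left (hyv ▸ hy) else hTdom y hy hyu hyv
      omega
    simp only [not_or, not_exists, not_and] at hu hv
    have := gammaP_le_ncard_add_one_of_not_dominated h1 h2 he hT hTdom hu.1 hu.2 hv.1
    omega
  · have hdom : IsDominating D T := fun y hy =>
      (hSdom.deleteEdges_of_subdiv_one hy).resolve_right fun h => hx h.1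
    have := gammaP_le_ncard ⟨hdom, hT⟩
    have := Set.ncard_le_ncard hTS
    omega

lemma gammaP_subdiv_lt_of_gammaP_deleteEdges_lt (h1 : InducedHereditary P)
    (h2 : ClosedUnderK1 P) (h : gammaP P (G.deleteEdges {s(u, v)}) < gammaP P G) :
    gammaP P (subdiv G u v 1) < gammaP P G := by
  obtain ⟨S, ⟨hSdom, hSP⟩, hScard⟩ := h1.exists_isGammaSet_of_gammaP_lt h2 h
  by_cases huv : u ∈ S ∧ v ∈ S
  · have hdom : IsDominating (subdiv G u v 1) (Sum.inl '' S) := by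
      rintro (w | i) hw
      · obtain ⟨a, ha, hadj⟩ := hSdom w fun hwS => hw ⟨w, hwS, rfl⟩
        exact ⟨Sum.inl a, Set.mem_image_of_mem _ ha, subdiv_one_adj_inl_inl.2 hadj⟩
      · exact ⟨Sum.inl u, Set.mem_image_of_mem _ huv.1, subdiv_one_adj_inl_inr.2 (Or.inl rfl)⟩
    calc gammaP P (subdiv G u v 1)
        ≤ (Sum.inl '' S).ncard :=
          gammaP_le_ncard ⟨hdom, h1.1 _ _ _ _ ⟨deleteEdgesInduceIsoSubdivInduce S⟩ hSP⟩
      _ = S.ncard := Set.ncard_image_of_injective _ Sum.inl_injective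
      _ < gammaP P G := hScard ▸ h
  · have := gammaP_le_ncard (P := P) (G := G)
      ⟨hSdom.mono (deleteEdges_le _), deleteEdges_induce_eq (G := G) (not_and_or.1 huv) ▸ hSP⟩
    omega

end EdgeCriticality

end

/-- `e` is `γ_H`-S⁻-critical iff `e` is `γ_H`-ER⁻-critical. -/
theorem sminus_iff_erminus (P : GraphProp) (h1 : InducedHereditary P) (h2 : ClosedUnderK1 P)
    {V : Type} [Fintype V] (G : SimpleGraph V) (u v : V) (he : G.Adj u v) :
    gammaP P (subdiv G u v 1) < gammaP P G ↔
    gammaP P (G.deleteEdges {s(u, v)}) < gammaP P G :=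
  ⟨gammaP_deleteEdges_lt_of_gammaP_subdiv_lt h1 h2 he,
    gammaP_subdiv_lt_of_gammaP_deleteEdges_lt h1 h2⟩
end

section
/- Let H be an induced-hereditary graph property closed under union with K₁. For every graph G and edge e of G: γ_H(G − e) ≤ γ_H(G_{e,3}) ≤ γ_H(G − e) + 1, where G_{e,3} is the graph obtained from G by subdividing e with three new vertices. -/
open SimpleGraph

section Helpers

lemma indHered_subset (P : GraphProp) (h1 : InducedHereditary P) {V : Type}
    (G : SimpleGraph V) {s t : Set V} (hts : t ⊆ s) (hP : P s (G.induce s)) :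
    P t (G.induce t) := by
  have h := h1.2 s (G.induce s) {x : s | x.1 ∈ t} hP
  refine h1.1 _ _ _ _ ⟨?_⟩ h
  exact {
    toEquiv := {
      toFun := fun x => ⟨x.1.1, x.2⟩
      invFun := fun y => ⟨⟨y.1, hts y.2⟩, y.2⟩
      left_inv := fun x => rfl
      right_inv := fun y => rfl }
    map_rel_iff' := Iff.rfl }

lemma indP_insert (P : GraphProp) (h1 : InducedHereditary P) (h2 : ClosedUnderK1 P)
    {V : Type} (G : SimpleGraph V) (T : Set V) (a : V) (ha : a ∉ T)
    (hadj : ∀ t ∈ T, ¬ G.Adj a t) (hP : P T (G.induce T)) :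
    P (insert a T : Set V) (G.induce (insert a T)) := by
  classical
  have h := h2 T (G.induce T) hP
  refine h1.1 _ _ _ _ ⟨?_⟩ h
  refine {
    toEquiv := {
      toFun := Sum.elim (fun x => ⟨x.1, Set.mem_insert_of_mem _ x.2⟩)
        (fun _ => ⟨a, Set.mem_insert _ _⟩)
      invFun := fun y => if h : y.1 ∈ T then Sum.inl ⟨y.1, h⟩ else Sum.inr ()
      left_inv := ?_
      right_inv := ?_ }
    map_rel_iff' := ?_ }
  · rintro (x | x)
    · simp [x.2]
    · simp [ha]
  · rintro ⟨y, hy⟩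
    by_cases h : y ∈ T
    · simp [h]
    · rcases hy with rfl | hy
      · simp [h]
      · exact absurd hy h
  · rintro (x | x) (y | y) <;>
      simp only [Equiv.coe_fn_mk, Sum.elim_inl, Sum.elim_inr, comap_adj,
        Function.Embedding.coe_subtype, addK1] <;>
      constructor
    · rintro h; exact ⟨x, y, rfl, rfl, h⟩
    · rintro ⟨x', y', hx, hy, h⟩
      simp only [Sum.inl.injEq] at hx hy; subst hx; subst hy; exact h
    · rintro h; exact absurd h.symm (hadj x.1 x.2)
    · rintro ⟨_, _, _, h, _⟩; simp at h
    · rintro h; exact absurd h (hadj y.1 y.2)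
    · rintro ⟨_, _, h, _, _⟩; simp at h
    · rintro h; exact absurd h (G.loopless.irrefl a)
    · rintro ⟨_, _, h, _, _⟩; simp at h

lemma subdiv_adj_inl_inl {V : Type} (G : SimpleGraph V) (u v : V) (t : ℕ) (a b : V) :
    (subdiv G u v t).Adj (Sum.inl a) (Sum.inl b) ↔ (G.deleteEdges {s(u,v)}).Adj a b := by
  show (G.Adj a b ∧ ¬((a = u ∧ b = v) ∨ (a = v ∧ b = u))) ↔ _
  rw [deleteEdges_adj]
  simp only [Set.mem_singleton_iff, Sym2.eq_iff]

lemma subdiv_inl_iso {V : Type} (G : SimpleGraph V) (u v : V) (t : ℕ) (T : Set V) :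
    Nonempty ((subdiv G u v t).induce (Sum.inl '' T) ≃g (G.deleteEdges {s(u,v)}).induce T) := by
  refine ⟨{ toEquiv := (Equiv.Set.image Sum.inl T Sum.inl_injective).symm
            map_rel_iff' := ?_ }⟩
  rintro ⟨a, ha⟩ ⟨b, hb⟩
  obtain ⟨a, ha', rfl⟩ := ha
  obtain ⟨b, hb', rfl⟩ := hb
  rw [show ((Equiv.Set.image Sum.inl T Sum.inl_injective).symm ⟨Sum.inl a, _⟩) = ⟨a, ha'⟩ from
    (Equiv.symm_apply_eq _).2 rfl]
  rw [show ((Equiv.Set.image Sum.inl T Sum.inl_injective).symm ⟨Sum.inl b, _⟩) = ⟨b, hb'⟩ from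
    (Equiv.symm_apply_eq _).2 rfl]
  exact (subdiv_adj_inl_inl G u v t a b).symm

lemma domP_del_to_sub (P : GraphProp) (h1 : InducedHereditary P) (h2 : ClosedUnderK1 P)
    {V : Type} (G : SimpleGraph V) (u v : V) (T : Set V)
    (hT : IsDomPSet P (G.deleteEdges {s(u,v)}) T) :
    IsDomPSet P (subdiv G u v 3) (insert (Sum.inr 1) (Sum.inl '' T)) ∧
      (insert (Sum.inr 1) (Sum.inl '' T) : Set (V ⊕ Fin 3)).ncard ≤ T.ncard + 1 := by
  refine ⟨⟨?_, ?_⟩, ?_⟩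
  · rintro (w | i) hx
    · have hwT : w ∉ T := fun h => hx (Set.mem_insert_of_mem _ ⟨w, h, rfl⟩)
      obtain ⟨d, hd, hadj⟩ := hT.1 w hwT
      exact ⟨Sum.inl d, Set.mem_insert_of_mem _ ⟨d, hd, rfl⟩,
        (subdiv_adj_inl_inl G u v 3 d w).2 hadj⟩
    · refine ⟨Sum.inr 1, Set.mem_insert _ _, ?_⟩
      have hi : (i : ℕ) ≠ 1 := by
        intro h
        exact hx (Set.mem_insert_iff.2 (Or.inl (congrArg Sum.inr (Fin.ext (by simpa using h)))))
      show ((1 : Fin 3) : ℕ) + 1 = (i : ℕ) ∨ (i : ℕ) + 1 = ((1 : Fin 3) : ℕ)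
      have := i.isLt
      simp only [Fin.val_one]
      omega
  · have hP0 : P (Sum.inl '' T : Set (V ⊕ Fin 3)) ((subdiv G u v 3).induce (Sum.inl '' T)) :=
      h1.1 _ _ _ _ (Nonempty.map Iso.symm (subdiv_inl_iso G u v 3 T)) hT.2
    refine indP_insert P h1 h2 _ _ _ (by simp) ?_ hP0
    rintro _ ⟨w, hw, rfl⟩ hadj
    have : (w = u ∧ ((1 : Fin 3) : ℕ) = 0) ∨ (w = v ∧ ((1 : Fin 3) : ℕ) + 1 = 3) := hadj
    simp only [Fin.val_one] at this
    omega
  · calc (insert (Sum.inr 1) (Sum.inl '' T) : Set (V ⊕ Fin 3)).ncard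
        ≤ (Sum.inl '' T : Set (V ⊕ Fin 3)).ncard + 1 := Set.ncard_insert_le _ _
      _ = T.ncard + 1 := by rw [Set.ncard_image_of_injective _ Sum.inl_injective]

lemma domP_sub_to_del (P : GraphProp) (h1 : InducedHereditary P) (h2 : ClosedUnderK1 P)
    {V : Type} [Fintype V] (G : SimpleGraph V) (u v : V) (he : G.Adj u v)
    (S : Set (V ⊕ Fin 3)) (hS : IsDomPSet P (subdiv G u v 3) S) :
    ∃ T : Set V, IsDomPSet P (G.deleteEdges {s(u,v)}) T ∧ T.ncard ≤ S.ncard := by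
  classical
  set Gd := G.deleteEdges {s(u,v)} with hGd
  have hne : u ≠ v := he.ne
  set T0 : Set V := {x : V | Sum.inl x ∈ S} with hT0
  have hsub0 : (Sum.inl '' T0 : Set (V ⊕ Fin 3)) ⊆ S := by
    rintro _ ⟨x, hx, rfl⟩; exact hx
  have hT0P : P T0 (Gd.induce T0) := by
    have := indHered_subset P h1 (subdiv G u v 3) hsub0 hS.2
    exact h1.1 _ _ _ _ (subdiv_inl_iso G u v 3 T0) this
  have noUV : ¬ Gd.Adj u v := by simp [hGd]
  -- general fact: vertices other than u, v are dominated by T0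
  have fact1 : ∀ w, w ∉ T0 → w ≠ u → w ≠ v → ∃ d ∈ T0, Gd.Adj d w := by
    intro w hw hwu hwv
    obtain ⟨d, hd, hadj⟩ := hS.1 (Sum.inl w) hw
    rcases d with d | i
    · exact ⟨d, hd, (subdiv_adj_inl_inl G u v 3 d w).1 hadj⟩
    · rcases hadj with ⟨h, _⟩ | ⟨h, _⟩
      · exact absurd h hwu
      · exact absurd h hwv
  have factU : (u ∉ T0 ∧ ∀ w ∈ T0, ¬ Gd.Adj w u) → Sum.inr 0 ∈ S := by
    rintro ⟨hu0, hu1⟩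
    obtain ⟨d, hd, hadj⟩ := hS.1 (Sum.inl u) hu0
    rcases d with d | i
    · exact absurd ((subdiv_adj_inl_inl G u v 3 d u).1 hadj) (hu1 d hd)
    · rcases hadj with ⟨_, h⟩ | ⟨h, _⟩
      · have : i = 0 := by ext; simpa using h
        rwa [this] at hd
      · exact absurd h.symm hne.symm
  have factV : (v ∉ T0 ∧ ∀ w ∈ T0, ¬ Gd.Adj w v) → Sum.inr 2 ∈ S := by
    rintro ⟨hv0, hv1⟩
    obtain ⟨d, hd, hadj⟩ := hS.1 (Sum.inl v) hv0
    rcases d with d | i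
    · exact absurd ((subdiv_adj_inl_inl G u v 3 d v).1 hadj) (hv1 d hd)
    · rcases hadj with ⟨h, _⟩ | ⟨_, h⟩
      · exact absurd h hne.symm
      · have : i = 2 := by ext; simpa using Nat.succ_injective h
        rwa [this] at hd
  have hSfin : S.Finite := Set.toFinite _
  have domT : ∀ T : Set V, T0 ⊆ T →
      ((u ∉ T0 ∧ ∀ w ∈ T0, ¬ Gd.Adj w u) → u ∈ T) →
      ((v ∉ T0 ∧ ∀ w ∈ T0, ¬ Gd.Adj w v) → v ∈ T) → IsDominating Gd T := by
    intro T hs hU hV w hw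
    by_cases hwu : w = u
    · subst hwu
      have h0 : w ∉ T0 := fun h => hw (hs h)
      have h1' : ¬ (w ∉ T0 ∧ ∀ x ∈ T0, ¬ Gd.Adj x w) := fun h => hw (hU h)
      push_neg at h1'
      obtain ⟨d, hd, hadj⟩ := h1' h0
      exact ⟨d, hs hd, hadj⟩
    · by_cases hwv : w = v
      · subst hwv
        have h0 : w ∉ T0 := fun h => hw (hs h)
        have h1' : ¬ (w ∉ T0 ∧ ∀ x ∈ T0, ¬ Gd.Adj x w) := fun h => hw (hV h)
        push_neg at h1'
        obtain ⟨d, hd, hadj⟩ := h1' h0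
        exact ⟨d, hs hd, hadj⟩
      · obtain ⟨d, hd, hadj⟩ := fact1 w (fun h => hw (hs h)) hwu hwv
        exact ⟨d, hs hd, hadj⟩
  by_cases hu : u ∉ T0 ∧ ∀ w ∈ T0, ¬ Gd.Adj w u
  · by_cases hv : v ∉ T0 ∧ ∀ w ∈ T0, ¬ Gd.Adj w v
    · -- both u and v need to be added
      refine ⟨insert u (insert v T0), ⟨domT _ (fun x hx =>
        Set.mem_insert_of_mem _ (Set.mem_insert_of_mem _ hx))
        (fun _ => Set.mem_insert _ _)
        (fun _ => Set.mem_insert_of_mem _ (Set.mem_insert _ _)), ?_⟩, ?_⟩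
      · have hPv : P (insert v T0 : Set V) (Gd.induce (insert v T0)) :=
          indP_insert P h1 h2 _ _ _ hv.1 (fun t ht hadj => hv.2 t ht hadj.symm) hT0P
        refine indP_insert P h1 h2 _ _ _ ?_ ?_ hPv
        · simp only [Set.mem_insert_iff, not_or]
          exact ⟨hne, hu.1⟩
        · rintro t (rfl | ht) hadj
          · exact noUV hadj
          · exact hu.2 t ht hadj.symm
      · have hsubS : (insert (Sum.inr 0) (insert (Sum.inr 2) (Sum.inl '' T0)) :
            Set (V ⊕ Fin 3)) ⊆ S := by
          rintro x (rfl | rfl | hx)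
          · exact factU hu
          · exact factV hv
          · exact hsub0 hx
        have hcard : (insert (Sum.inr 0) (insert (Sum.inr 2) (Sum.inl '' T0)) :
            Set (V ⊕ Fin 3)).ncard = T0.ncard + 2 := by
          rw [Set.ncard_insert_of_notMem (by simp [(by decide : (0 : Fin 3) ≠ 2)])
            (Set.toFinite _), Set.ncard_insert_of_notMem (by simp) (Set.toFinite _),
            Set.ncard_image_of_injective _ Sum.inl_injective]
        calc (insert u (insert v T0)).ncard
            ≤ (insert v T0).ncard + 1 := Set.ncard_insert_le _ _
          _ ≤ T0.ncard + 1 + 1 := by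
              exact Nat.add_le_add_right (Set.ncard_insert_le _ _) 1
          _ = T0.ncard + 2 := by ring
          _ ≤ S.ncard := hcard ▸ Set.ncard_le_ncard hsubS hSfin
    · -- only u needs to be added
      refine ⟨insert u T0, ⟨domT _ (fun x hx => Set.mem_insert_of_mem _ hx)
        (fun _ => Set.mem_insert _ _) (fun h => absurd h hv), ?_⟩, ?_⟩
      · exact indP_insert P h1 h2 _ _ _ hu.1 (fun t ht hadj => hu.2 t ht hadj.symm) hT0P
      · have hsubS : (insert (Sum.inr 0) (Sum.inl '' T0) : Set (V ⊕ Fin 3)) ⊆ S := by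
          rintro x (rfl | hx)
          · exact factU hu
          · exact hsub0 hx
        have hcard : (insert (Sum.inr 0) (Sum.inl '' T0) : Set (V ⊕ Fin 3)).ncard
            = T0.ncard + 1 := by
          rw [Set.ncard_insert_of_notMem (by simp) (Set.toFinite _),
            Set.ncard_image_of_injective _ Sum.inl_injective]
        calc (insert u T0).ncard ≤ T0.ncard + 1 := Set.ncard_insert_le _ _
          _ ≤ S.ncard := hcard ▸ Set.ncard_le_ncard hsubS hSfin
  · by_cases hv : v ∉ T0 ∧ ∀ w ∈ T0, ¬ Gd.Adj w v
    · -- only v needs to be added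
      refine ⟨insert v T0, ⟨domT _ (fun x hx => Set.mem_insert_of_mem _ hx)
        (fun h => absurd h hu) (fun _ => Set.mem_insert _ _), ?_⟩, ?_⟩
      · exact indP_insert P h1 h2 _ _ _ hv.1 (fun t ht hadj => hv.2 t ht hadj.symm) hT0P
      · have hsubS : (insert (Sum.inr 2) (Sum.inl '' T0) : Set (V ⊕ Fin 3)) ⊆ S := by
          rintro x (rfl | hx)
          · exact factV hv
          · exact hsub0 hx
        have hcard : (insert (Sum.inr 2) (Sum.inl '' T0) : Set (V ⊕ Fin 3)).ncard
            = T0.ncard + 1 := by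
          rw [Set.ncard_insert_of_notMem (by simp) (Set.toFinite _),
            Set.ncard_image_of_injective _ Sum.inl_injective]
        calc (insert v T0).ncard ≤ T0.ncard + 1 := Set.ncard_insert_le _ _
          _ ≤ S.ncard := hcard ▸ Set.ncard_le_ncard hsubS hSfin
    · -- T0 itself works
      refine ⟨T0, ⟨domT _ (fun x hx => hx) (fun h => absurd h hu) (fun h => absurd h hv),
        hT0P⟩, ?_⟩
      calc T0.ncard = (Sum.inl '' T0 : Set (V ⊕ Fin 3)).ncard :=
            (Set.ncard_image_of_injective _ Sum.inl_injective).symm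
        _ ≤ S.ncard := Set.ncard_le_ncard hsub0 hSfin

end Helpers

/-- `γ_H(G − e) ≤ γ_H(G_{e,3}) ≤ γ_H(G − e) + 1`. -/
theorem gammaP_subdiv_three_bounds (P : GraphProp) (h1 : InducedHereditary P)
    (h2 : ClosedUnderK1 P) {V : Type} [Fintype V] (G : SimpleGraph V)
    (u v : V) (he : G.Adj u v) :
    gammaP P (G.deleteEdges {s(u, v)}) ≤ gammaP P (subdiv G u v 3) ∧
    gammaP P (subdiv G u v 3) ≤ gammaP P (G.deleteEdges {s(u, v)}) + 1 := by
  classical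
  constructor
  · by_cases hA : (Set.ncard '' {S : Set (V ⊕ Fin 3) | IsDomPSet P (subdiv G u v 3) S}).Nonempty
    · obtain ⟨S, hS, hcard⟩ := Nat.sInf_mem hA
      obtain ⟨T, hT, hle⟩ := domP_sub_to_del P h1 h2 G u v he S hS
      calc gammaP P (G.deleteEdges {s(u, v)}) ≤ T.ncard := Nat.sInf_le ⟨T, hT, rfl⟩
        _ ≤ S.ncard := hle
        _ = gammaP P (subdiv G u v 3) := hcard
    · have hB : {T : Set V | IsDomPSet P (G.deleteEdges {s(u, v)}) T} = ∅ := by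
        rw [Set.eq_empty_iff_forall_notMem]
        intro T hT
        exact hA ⟨_, ⟨_, (domP_del_to_sub P h1 h2 G u v T hT).1, rfl⟩⟩
      have : gammaP P (G.deleteEdges {s(u, v)}) = 0 := by
        rw [gammaP, hB, Set.image_empty, Nat.sInf_empty]
      rw [this]
      exact Nat.zero_le _
  · by_cases hB : (Set.ncard '' {T : Set V | IsDomPSet P (G.deleteEdges {s(u, v)}) T}).Nonempty
    · obtain ⟨T, hT, hcard⟩ := Nat.sInf_mem hB
      obtain ⟨hS, hle⟩ := domP_del_to_sub P h1 h2 G u v T hT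
      calc gammaP P (subdiv G u v 3) ≤ _ := Nat.sInf_le ⟨_, hS, rfl⟩
        _ ≤ T.ncard + 1 := hle
        _ = gammaP P (G.deleteEdges {s(u, v)}) + 1 := by rw [hcard]; rfl
    · have hA : {S : Set (V ⊕ Fin 3) | IsDomPSet P (subdiv G u v 3) S} = ∅ := by
        rw [Set.eq_empty_iff_forall_notMem]
        intro S hS
        obtain ⟨T, hT, _⟩ := domP_sub_to_del P h1 h2 G u v he S hS
        exact hB ⟨_, ⟨_, hT, rfl⟩⟩
      have : gammaP P (subdiv G u v 3) = 0 := by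
        rw [gammaP, hA, Set.image_empty, Nat.sInf_empty]
      rw [this]
      exact Nat.zero_le _
end

section
/- Let H be a nondegenerate graph property closed under union with K₁, G a graph, and v ∈ V(G). If γ_H(G − v) < γ_H(G), then γ_H(G − v) = γ_H(G) − 1; moreover, for every minimum dominating H-set M of G − v, the set M ∪ {v} is a minimum dominating H-set of G and pn_G[v, M ∪ {v}] = {v}. -/
open SimpleGraph

lemma aux_induce_induce {V : Type} (G : SimpleGraph V) (s : Set V) (t : Set s) :
    Nonempty ((G.induce s).induce t ≃g G.induce ((↑) '' t : Set V)) := by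
  refine ⟨⟨Equiv.Set.image _ t Subtype.coe_injective, ?_⟩⟩
  intro a b
  simp [Equiv.Set.image, Equiv.Set.imageOfInjOn]

lemma aux_exists_domPSet (P : GraphProp) (h1 : Nondegenerate P) {V : Type} [Fintype V]
    (G : SimpleGraph V) : ∃ S : Set V, IsDomPSet P G S := by
  obtain ⟨S, hS, hmax⟩ := Set.Finite.exists_maximalFor Set.ncard {S : Set V | IsIndep G S}
    (Set.toFinite _) ⟨∅, by simp [IsIndep]⟩
  refine ⟨S, ?_, ?_⟩
  · intro w hw
    by_contra hno
    push_neg at hno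
    have hind : IsIndep G (insert w S) := by
      rw [IsIndep, (haveI : Std.Symm (fun a b => ¬ G.Adj a b) := ⟨fun a b (h : ¬ G.Adj a b) hab => h hab.symm⟩; Set.pairwise_insert_of_symm)]
      exact ⟨hS, fun b hb _ h => hno b hb h.symm⟩
    have hle : S.ncard ≤ (insert w S).ncard :=
      Set.ncard_le_ncard (Set.subset_insert _ _) (Set.toFinite _)
    have := hmax hind hle
    rw [Set.ncard_insert_of_notMem hw (Set.toFinite _)] at this
    omega
  · have hbot : G.induce S = ⊥ := by
      ext a b
      simp only [comap_adj, Function.Embedding.coe_subtype, bot_adj, iff_false]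
      intro h
      rcases eq_or_ne (a : V) (b : V) with he | hne
      · exact G.loopless.irrefl _ (he ▸ h)
      · exact hS a.2 b.2 hne h
    rw [hbot]; exact h1.2 _

lemma aux_gamma_attained (P : GraphProp) (h1 : Nondegenerate P) {V : Type} [Fintype V]
    (G : SimpleGraph V) : ∃ S : Set V, IsGammaSet P G S := by
  obtain ⟨S0, hS0⟩ := aux_exists_domPSet P h1 G
  have hne : (Set.ncard '' {S : Set V | IsDomPSet P G S}).Nonempty := ⟨_, S0, hS0, rfl⟩
  obtain ⟨S, hS, hcard⟩ := Nat.sInf_mem hne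
  exact ⟨S, hS, hcard⟩

/-- if `γ_H(G − v) < γ_H(G)` then `γ_H(G − v) = γ_H(G) − 1`; moreover for
every `γ_H`-set `M` of `G − v`, `M ∪ {v}` is a `γ_H`-set of `G` with `pn_G[v, M ∪ {v}] = {v}`. -/
theorem gammaP_delVert_lt (P : GraphProp) (h1 : Nondegenerate P) (h2 : ClosedUnderK1 P)
    {V : Type} [Fintype V] [DecidableEq V] (G : SimpleGraph V) (v : V)
    (hlt : gammaP P (delVert G v) < gammaP P G) :
    gammaP P (delVert G v) = gammaP P G - 1 ∧
    ∀ M : Set {w : V // w ≠ v}, IsGammaSet P (delVert G v) M →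
      IsGammaSet P G (insert v ((↑) '' M : Set V)) ∧
      pn G (insert v ((↑) '' M : Set V)) v = {v} := by
  have key : ∀ M : Set {w : V // w ≠ v}, IsGammaSet P (delVert G v) M →
      ∀ w : V, w ∈ ((↑) '' M : Set V) → ¬ G.Adj w v := by
    intro M hM w hwM hadj
    have hdom : IsDomPSet P G ((↑) '' M) := by
      constructor
      · intro z hz
        by_cases hzv : z = v
        · subst hzv; exact ⟨w, hwM, hadj⟩
        · have hz' : (⟨z, hzv⟩ : {w : V // w ≠ v}) ∉ M := fun h => hz ⟨_, h, rfl⟩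
          obtain ⟨x, hx, hxadj⟩ := hM.1.1 _ hz'
          exact ⟨↑x, ⟨x, hx, rfl⟩, hxadj⟩
      · obtain ⟨e⟩ := aux_induce_induce G {w : V | w ≠ v} M
        exact h1.1 _ _ _ _ ⟨e⟩ hM.1.2
    have hle : gammaP P G ≤ ((↑) '' M : Set V).ncard :=
      Nat.sInf_le ⟨_, hdom, rfl⟩
    rw [Set.ncard_image_of_injective _ Subtype.coe_injective, hM.2] at hle
    omega
  have main : ∀ M : Set {w : V // w ≠ v}, IsGammaSet P (delVert G v) M →
      IsDomPSet P G (insert v ((↑) '' M : Set V)) ∧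
      (insert v ((↑) '' M : Set V)).ncard = M.ncard + 1 := by
    intro M hM
    have hkey := key M hM
    have hvnot : v ∉ ((↑) '' M : Set V) := by rintro ⟨m, hm, hmv⟩; exact m.2 hmv
    constructor
    · constructor
      · intro z hz
        have hzv : z ≠ v := fun h => hz (by rw [h]; exact Set.mem_insert _ _)
        have hz' : (⟨z, hzv⟩ : {w : V // w ≠ v}) ∉ M :=
          fun h => hz (Set.mem_insert_of_mem _ ⟨_, h, rfl⟩)
        obtain ⟨x, hx, hxadj⟩ := hM.1.1 _ hz'
        exact ⟨↑x, Set.mem_insert_of_mem _ ⟨x, hx, rfl⟩, hxadj⟩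
      · have hP : P _ (addK1 ((delVert G v).induce M)) := h2 _ _ hM.1.2
        refine h1.1 _ _ _ _ ⟨?_⟩ hP
        refine ⟨⟨?_, ?_, ?_, ?_⟩, ?_⟩
        · exact fun a => match a with
            | Sum.inl m => ⟨↑↑m, Set.mem_insert_of_mem _ ⟨↑m, m.2, rfl⟩⟩
            | Sum.inr _ => ⟨v, Set.mem_insert _ _⟩
        · exact fun x => if h : (x : V) = v then Sum.inr () else
            Sum.inl ⟨⟨(x : V), h⟩, by
              rcases x.2 with h' | ⟨m, hm, hmx⟩
              · exact absurd h' h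
              · exact Set.mem_of_eq_of_mem (Subtype.ext hmx.symm) hm⟩
        · rintro (⟨⟨w, hw⟩, hm⟩ | ⟨⟩)
          · simp only [dif_neg hw]
          · simp only [dif_pos]
        · intro x
          by_cases h : (x : V) = v
          · simp only [dif_pos h]; exact Subtype.ext h.symm
          · simp only [dif_neg h]
        · rintro (m | u) (m' | u')
          · constructor
            · intro h
              exact ⟨m, m', rfl, rfl, h⟩
            · rintro ⟨x, y, hx, hy, h⟩
              obtain rfl := Sum.inl_injective hx
              obtain rfl := Sum.inl_injective hy
              exact h
          · constructor
            · intro h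
              exact absurd h (hkey _ ⟨↑m, m.2, rfl⟩)
            · rintro ⟨x, y, -, hy, -⟩
              exact absurd hy (by simp)
          · constructor
            · intro h
              exact absurd h.symm (hkey _ ⟨↑m', m'.2, rfl⟩)
            · rintro ⟨x, y, hx, -, -⟩
              exact absurd hx (by simp)
          · constructor
            · intro h
              exact absurd h (G.loopless.irrefl v)
            · rintro ⟨x, y, hx, -, -⟩
              exact absurd hx (by simp)
    · rw [Set.ncard_insert_of_notMem hvnot (Set.toFinite _),
        Set.ncard_image_of_injective _ Subtype.coe_injective]
  obtain ⟨M0, hM0⟩ := aux_gamma_attained P h1 (delVert G v)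
  have hge : gammaP P G ≤ gammaP P (delVert G v) + 1 := by
    obtain ⟨hdom, hcard⟩ := main M0 hM0
    have hmem : (insert v ((↑) '' M0 : Set V)).ncard ∈
        Set.ncard '' {S : Set V | IsDomPSet P G S} :=
      Set.mem_image_of_mem _ hdom
    have h : gammaP P G ≤ (insert v ((↑) '' M0 : Set V)).ncard := Nat.sInf_le hmem
    rw [hcard, hM0.2] at h
    exact h
  have heq : gammaP P G = gammaP P (delVert G v) + 1 := le_antisymm hge hlt
  refine ⟨by omega, ?_⟩
  intro M hM
  obtain ⟨hdom, hcard⟩ := main M hM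
  have hkey := key M hM
  refine ⟨⟨hdom, by rw [hcard, hM.2, heq]⟩, ?_⟩
  ext y
  simp only [pn, Set.mem_setOf_eq, Set.mem_singleton_iff]
  constructor
  · intro hy
    by_contra hyv
    have hyX : y ∉ insert v ((↑) '' M : Set V) := by
      intro hmem
      have : y ∈ insert y (G.neighborSet y) ∩ insert v ((↑) '' M : Set V) :=
        ⟨Set.mem_insert _ _, hmem⟩
      rw [hy] at this
      exact hyv this
    have hz' : (⟨y, hyv⟩ : {w : V // w ≠ v}) ∉ M :=
      fun h => hyX (Set.mem_insert_of_mem _ ⟨_, h, rfl⟩)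
    obtain ⟨x, hx, hxadj⟩ := hM.1.1 _ hz'
    have hxmem : (↑x : V) ∈ insert y (G.neighborSet y) ∩ insert v ((↑) '' M : Set V) := by
      refine ⟨Set.mem_insert_of_mem _ ?_, Set.mem_insert_of_mem _ ⟨x, hx, rfl⟩⟩
      exact (hxadj : G.Adj (↑x : V) y).symm
    rw [hy] at hxmem
    exact x.2 hxmem
  · intro hyv
    rw [hyv]
    ext z
    simp only [Set.mem_inter_iff, Set.mem_insert_iff, SimpleGraph.mem_neighborSet,
      Set.mem_singleton_iff]
    constructor
    · rintro ⟨h1' | h1', h2' | h2'⟩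
      · exact h1'
      · exact h1'
      · exact h2'
      · exact absurd h1'.symm (hkey z h2')
    · rintro rfl
      exact ⟨Or.inl rfl, Or.inl rfl⟩
end

section
/- Let H be a hereditary graph property closed under union with K₁ and e = xy an edge of a graph G with γ_H(G) > γ_H(G − e). Then: (a) no minimum dominating H-set of G − e induces a subgraph of G with property H (i.e., is an H-set in G); (b) both x and y lie in every minimum dominating H-set of G − e; (c) γ_H(G − x) ≥ γ_H(G − e) and γ_H(G − y) ≥ γ_H(G − e); (d) if γ_H(G − x) = γ_H(G − e) then y belongs to no minimum dominating H-set of G − x. -/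
open SimpleGraph

section Infra

/-- iso between edgeless graphs over an equiv of vertex types -/
noncomputable def isoOfEdgeless {A B : Type} (G1 : SimpleGraph A) (G2 : SimpleGraph B)
    (h1 : ∀ a b, ¬ G1.Adj a b) (h2 : ∀ a b, ¬ G2.Adj a b) (e : A ≃ B) : G1 ≃g G2 :=
  ⟨e, fun {a b} => iff_of_false (h2 _ _) (h1 _ _)⟩

lemma P_edgeless (P : GraphProp) (h1 : Hereditary P) (h2 : ClosedUnderK1 P)
    (hne : ∃ (V : Type) (G : SimpleGraph V), P V G)
    (W : Type) [Fintype W] (G : SimpleGraph W) (hG : ∀ a b, ¬ G.Adj a b) : P W G := by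
  obtain ⟨V₀, G₀, hP0⟩ := hne
  have hempty : P (↥(∅ : Set V₀)) (G₀.induce ∅) := h1.1.2 _ _ _ hP0
  have hemptyE : ∀ a b : ↥(∅ : Set V₀), ¬ (G₀.induce ∅).Adj a b := fun a _ _ => a.2.elim
  have hbotE : ∀ (n : ℕ) (a b : Fin n), ¬ (⊥ : SimpleGraph (Fin n)).Adj a b := fun _ _ _ h => h
  have key : ∀ n, P (Fin n) ⊥ := by
    intro n
    induction n with
    | zero =>
      refine h1.1.1 _ _ _ _ ⟨isoOfEdgeless _ _ hemptyE (hbotE 0) ?_⟩ hempty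
      exact Equiv.equivOfIsEmpty _ _
    | succ n ih =>
      have := h2 _ _ ih
      refine h1.1.1 _ _ _ _ ⟨isoOfEdgeless _ _ ?_ (hbotE (n+1)) ?_⟩ this
      · rintro a b ⟨u, v, rfl, rfl, h⟩; exact h
      · exact Fintype.equivOfCardEq (by simp)
  exact h1.1.1 _ _ _ _ ⟨isoOfEdgeless _ _ (hbotE _) hG (Fintype.equivFin W).symm⟩
    (key (Fintype.card W))

lemma exists_indep_dominating {W : Type} [Fintype W] (G : SimpleGraph W) :
    ∃ S : Set W, IsDominating G S ∧ ∀ a b : W, a ∈ S → b ∈ S → ¬ G.Adj a b := by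
  classical
  obtain ⟨S, hS, hmax⟩ := Finset.exists_max_image
    (Finset.univ.filter (fun s : Finset W => ∀ a ∈ s, ∀ b ∈ s, ¬ G.Adj a b))
    Finset.card ⟨∅, by simp⟩
  simp only [Finset.mem_filter, Finset.mem_univ, true_and] at hS hmax
  refine ⟨↑S, ?_, fun a b ha hb => hS a ha b hb⟩
  intro v hv
  by_contra hc
  push_neg at hc
  have hvS : v ∉ S := fun h => hv (Finset.mem_coe.2 h)
  have hins : ∀ a ∈ insert v S, ∀ b ∈ insert v S, ¬ G.Adj a b := by
    intro a ha b hb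
    rcases Finset.mem_insert.1 ha with rfl | ha' <;> rcases Finset.mem_insert.1 hb with rfl | hb'
    · exact fun h => G.loopless.irrefl _ h
    · exact fun h => hc b (Finset.mem_coe.2 hb') h.symm
    · exact fun h => hc a (Finset.mem_coe.2 ha') h
    · exact hS a ha' b hb'
  have := hmax _ hins
  rw [Finset.card_insert_of_notMem hvS] at this
  omega

lemma exists_domPSet (P : GraphProp) (h1 : Hereditary P) (h2 : ClosedUnderK1 P)
    (hne : ∃ (V : Type) (G : SimpleGraph V), P V G)
    {W : Type} [Fintype W] (G : SimpleGraph W) : ∃ S, IsDomPSet P G S := by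
  classical
  obtain ⟨S, hdom, hind⟩ := exists_indep_dominating G
  refine ⟨S, hdom, P_edgeless P h1 h2 hne _ _ ?_⟩
  intro a b h
  exact hind a b a.2 b.2 h

lemma gammaP_le (P : GraphProp) {W : Type} [Fintype W] {G : SimpleGraph W} {S : Set W}
    (hS : IsDomPSet P G S) : gammaP P G ≤ S.ncard :=
  Nat.sInf_le ⟨S, hS, rfl⟩

lemma exists_gammaSet (P : GraphProp) {W : Type} [Fintype W] {G : SimpleGraph W}
    (hne : ∃ S, IsDomPSet P G S) : ∃ S, IsGammaSet P G S := by
  have h : (Set.ncard '' {S : Set W | IsDomPSet P G S}).Nonempty := by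
    obtain ⟨S, hS⟩ := hne; exact ⟨S.ncard, S, hS, rfl⟩
  obtain ⟨S, hS, hcard⟩ := Nat.sInf_mem h
  exact ⟨S, hS, hcard⟩

end Infra
section Infra2

lemma induce_deleteEdge_eq {V : Type} (G : SimpleGraph V) (x y : V) (S : Set V) (hx : x ∉ S) :
    (G.deleteEdges {s(x, y)}).induce S = G.induce S := by
  ext a b
  show (G.deleteEdges {s(x,y)}).Adj a b ↔ G.Adj a b
  rw [SimpleGraph.deleteEdges_adj]
  simp only [Set.mem_singleton_iff, Sym2.eq_iff]
  constructor
  · exact fun h => h.1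
  · intro h
    refine ⟨h, ?_⟩
    rintro (⟨ha, hb⟩ | ⟨ha, hb⟩)
    · exact hx (ha ▸ a.2)
    · exact hx (hb ▸ b.2)

noncomputable def induceInduceIso {V : Type} (G : SimpleGraph V) (A : Set V) (S : Set ↥A) :
    (G.induce A).induce S ≃g G.induce (Subtype.val '' S) := by
  refine ⟨Equiv.Set.image Subtype.val S Subtype.val_injective, ?_⟩
  intro a b
  show G.Adj _ _ ↔ G.Adj _ _
  simp [Equiv.Set.image, Equiv.Set.imageOfInjOn]

noncomputable def addK1InsertIso {V : Type} (G : SimpleGraph V) (D : Set V) (x : V)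
    (hx : x ∉ D) (hiso : ∀ u ∈ D, ¬ G.Adj u x) :
    addK1 (G.induce D) ≃g G.induce (insert x D) := by
  classical
  refine ⟨(Equiv.Set.insert hx).symm, ?_⟩
  rintro (a | a) (b | b) <;>
    simp only [SimpleGraph.comap_adj, Function.Embedding.coe_subtype,
      Equiv.Set.insert_symm_apply_inl, Equiv.Set.insert_symm_apply_inr]
  · constructor
    · intro h; exact ⟨a, b, rfl, rfl, h⟩
    · rintro ⟨u, v, hu, hv, h⟩
      cases hu; cases hv; exact h
  · constructor
    · intro h; exact absurd h (hiso a a.2)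
    · rintro ⟨u, v, _, hv, _⟩; exact absurd hv (by simp)
  · constructor
    · intro h; exact absurd h.symm (hiso b b.2)
    · rintro ⟨u, v, hu, _, _⟩; exact absurd hu (by simp)
  · constructor
    · intro h; exact absurd h (G.loopless.irrefl x)
    · rintro ⟨u, v, hu, _, _⟩; exact absurd hu (by simp)

end Infra2
section Parts

lemma adj_deleteEdge_of_ne {V : Type} (G : SimpleGraph V) {x y u v : V}
    (h : G.Adj u v) (hu : u ≠ x) (hv : v ≠ x) : (G.deleteEdges {s(x, y)}).Adj u v := by
  rw [SimpleGraph.deleteEdges_adj]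
  refine ⟨h, ?_⟩
  simp only [Set.mem_singleton_iff, Sym2.eq_iff]
  rintro (⟨rfl, rfl⟩ | ⟨rfl, rfl⟩)
  · exact hu rfl
  · exact hv rfl

lemma adj_deleteEdge_of_ne' {V : Type} (G : SimpleGraph V) {x y u : V}
    (h : G.Adj u x) (hu : u ≠ y) : (G.deleteEdges {s(x, y)}).Adj u x := by
  rw [SimpleGraph.deleteEdges_adj]
  refine ⟨h, ?_⟩
  simp only [Set.mem_singleton_iff, Sym2.eq_iff]
  rintro (⟨rfl, rfl⟩ | ⟨rfl, -⟩)
  · exact G.loopless.irrefl _ h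
  · exact hu rfl

lemma partA (P : GraphProp) {V : Type} [Fintype V] (G : SimpleGraph V) (x y : V)
    (hgt : gammaP P (G.deleteEdges {s(x, y)}) < gammaP P G) :
    ∀ M : Set V, IsGammaSet P (G.deleteEdges {s(x, y)}) M → ¬ P M (G.induce M) := by
  rintro M ⟨⟨hdom, _⟩, hcard⟩ hPG
  have hdomG : IsDominating G M := by
    intro v hv
    obtain ⟨u, hu, hadj⟩ := hdom v hv
    exact ⟨u, hu, ((SimpleGraph.deleteEdges_adj).1 hadj).1⟩
  have hle := gammaP_le P (G := G) ⟨hdomG, hPG⟩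
  rw [hcard] at hle
  omega

lemma partB_x (P : GraphProp) {V : Type} [Fintype V] (G : SimpleGraph V) (x y : V)
    (hgt : gammaP P (G.deleteEdges {s(x, y)}) < gammaP P G) :
    ∀ M : Set V, IsGammaSet P (G.deleteEdges {s(x, y)}) M → x ∈ M := by
  intro M hM
  by_contra hx
  have heq := induce_deleteEdge_eq G x y M hx
  exact partA P G x y hgt M hM (heq ▸ hM.1.2)

lemma P_nonempty_of_gamma_pos (P : GraphProp) {V : Type} [Fintype V] (G : SimpleGraph V)
    (h : 0 < gammaP P G) : ∃ (V' : Type) (G' : SimpleGraph V'), P V' G' := by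
  by_contra hc
  push_neg at hc
  have hemp : {S : Set V | IsDomPSet P G S} = ∅ := by
    ext S
    simp only [Set.mem_setOf_eq, Set.mem_empty_iff_false, iff_false]
    exact fun hS => hc _ _ hS.2
  rw [gammaP, hemp] at h
  simp at h

end Parts
section PartC

lemma image_facts {V : Type} (G : SimpleGraph V) (x : V)
    (D : Set {w : V // w ≠ x}) :
    x ∉ Subtype.val '' D ∧ (Subtype.val '' D).ncard = D.ncard := by
  constructor
  · rintro ⟨⟨w, hw⟩, -, h⟩; exact hw h
  · exact Set.ncard_image_of_injective _ Subtype.val_injective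

lemma P_image (P : GraphProp) (h1 : Hereditary P) {V : Type} (G : SimpleGraph V) (x : V)
    (D : Set {w : V // w ≠ x}) (hP : P D ((delVert G x).induce D)) :
    P (Subtype.val '' D) (G.induce (Subtype.val '' D)) :=
  h1.1.1 _ _ _ _ ⟨induceInduceIso G {w : V | w ≠ x} D⟩ hP

lemma dom_image {V : Type} (G : SimpleGraph V) (x : V) (D : Set {w : V // w ≠ x})
    (hdom : IsDominating (delVert G x) D) :
    ∀ v : V, v ≠ x → v ∉ Subtype.val '' D →
      ∃ u ∈ Subtype.val '' D, G.Adj u v ∧ u ≠ x := by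
  intro v hvx hvD
  obtain ⟨u, hu, hadj⟩ := hdom ⟨v, hvx⟩ (fun h => hvD ⟨_, h, rfl⟩)
  exact ⟨u.val, ⟨u, hu, rfl⟩, hadj, u.2⟩

lemma partC_x (P : GraphProp) (h1 : Hereditary P) (h2 : ClosedUnderK1 P)
    {V : Type} [Fintype V] [DecidableEq V] (G : SimpleGraph V) (x y : V) (he : G.Adj x y)
    (hgt : gammaP P (G.deleteEdges {s(x, y)}) < gammaP P G) :
    gammaP P (G.deleteEdges {s(x, y)}) ≤ gammaP P (delVert G x) := by
  classical
  by_contra hlt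
  push_neg at hlt
  have hPne := P_nonempty_of_gamma_pos P G (by omega)
  obtain ⟨D, hD, hDcard⟩ := exists_gammaSet P (exists_domPSet P h1 h2 hPne (delVert G x))
  set D' : Set V := Subtype.val '' D with hD'def
  obtain ⟨hxD', hcardD'⟩ := image_facts G x D
  rw [← hD'def] at hcardD'
  have hPD' : P D' (G.induce D') := P_image P h1 G x D hD.2
  have hdom' := dom_image G x D hD.1
  by_cases hcase : ∃ u ∈ D', (G.deleteEdges {s(x, y)}).Adj u x
  · -- D' dominates G - e
    have hdomGe : IsDominating (G.deleteEdges {s(x, y)}) D' := by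
      intro v hv
      by_cases hvx : v = x
      · subst hvx; exact hcase
      · obtain ⟨u, hu, hadj, hux⟩ := hdom' v hvx hv
        exact ⟨u, hu, adj_deleteEdge_of_ne G hadj hux hvx⟩
    have hle : gammaP P (G.deleteEdges {s(x, y)}) ≤ D'.ncard := by
      refine gammaP_le P ⟨hdomGe, ?_⟩
      rw [induce_deleteEdge_eq G x y D' hxD']
      exact hPD'
    omega
  · push_neg at hcase
    by_cases hy : y ∈ D'
    · -- D' dominates G
      have hdomG : IsDominating G D' := by
        intro v hv
        by_cases hvx : v = x
        · subst hvx; exact ⟨y, hy, he.symm⟩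
        · obtain ⟨u, hu, hadj, -⟩ := hdom' v hvx hv
          exact ⟨u, hu, hadj⟩
      have hle : gammaP P G ≤ D'.ncard := gammaP_le P ⟨hdomG, hPD'⟩
      omega
    · -- x is G-isolated from D'
      have hnadj : ∀ u ∈ D', ¬ G.Adj u x := by
        intro u hu hadj
        by_cases huy : u = y
        · subst huy; exact hy hu
        · exact hcase u hu (adj_deleteEdge_of_ne' G hadj huy)
      have hPS : P (insert x D' : Set V) (G.induce (insert x D')) :=
        h1.1.1 _ _ _ _ ⟨addK1InsertIso G D' x hxD' hnadj⟩ (h2 _ _ hPD')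
      have hdomS : IsDominating G (insert x D') := by
        intro v hv
        have hvx : v ≠ x := fun h => hv (h ▸ Set.mem_insert x D')
        obtain ⟨u, hu, hadj, -⟩ := hdom' v hvx (fun h => hv (Set.mem_insert_of_mem _ h))
        exact ⟨u, Set.mem_insert_of_mem _ hu, hadj⟩
      have hle : gammaP P G ≤ (insert x D' : Set V).ncard := gammaP_le P ⟨hdomS, hPS⟩
      rw [Set.ncard_insert_of_notMem hxD' (Set.toFinite D'), ← hD'def] at hle
      omega

end PartC
section PartD

lemma partD (P : GraphProp) (h1 : Hereditary P) (h2 : ClosedUnderK1 P)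
    {V : Type} [Fintype V] [DecidableEq V] (G : SimpleGraph V) (x y : V) (he : G.Adj x y)
    (hgt : gammaP P (G.deleteEdges {s(x, y)}) < gammaP P G)
    (heq : gammaP P (delVert G x) = gammaP P (G.deleteEdges {s(x, y)}))
    (M : Set {w : V // w ≠ x}) (hM : IsGammaSet P (delVert G x) M) :
    (⟨y, he.ne'⟩ : {w : V // w ≠ x}) ∉ M := by
  intro hyM
  set M' : Set V := Subtype.val '' M with hM'def
  obtain ⟨hxM', hcardM'⟩ := image_facts G x M
  rw [← hM'def] at hcardM'
  have hPM' : P M' (G.induce M') := P_image P h1 G x M hM.1.2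
  have hdom' := dom_image G x M hM.1.1
  have hyM' : y ∈ M' := ⟨_, hyM, rfl⟩
  by_cases hcase : ∃ u ∈ M', (G.deleteEdges {s(x, y)}).Adj u x
  · have hdomGe : IsDominating (G.deleteEdges {s(x, y)}) M' := by
      intro v hv
      by_cases hvx : v = x
      · subst hvx; exact hcase
      · obtain ⟨u, hu, hadj, hux⟩ := hdom' v hvx hv
        exact ⟨u, hu, adj_deleteEdge_of_ne G hadj hux hvx⟩
    have hGam : IsGammaSet P (G.deleteEdges {s(x, y)}) M' := by
      refine ⟨⟨hdomGe, ?_⟩, ?_⟩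
      · rw [induce_deleteEdge_eq G x y M' hxM']; exact hPM'
      · rw [hcardM', hM.2, heq]
    exact hxM' (partB_x P G x y hgt M' hGam)
  · push_neg at hcase
    have hdomG : IsDominating G M' := by
      intro v hv
      by_cases hvx : v = x
      · subst hvx; exact ⟨y, hyM', he.symm⟩
      · obtain ⟨u, hu, hadj, -⟩ := hdom' v hvx hv
        exact ⟨u, hu, hadj⟩
    have hle : gammaP P G ≤ M'.ncard := gammaP_le P ⟨hdomG, hPM'⟩
    have h2' := hM.2
    omega

end PartD

/-- structure of `γ_H`-sets of `G − e` when `γ_H(G) > γ_H(G − e)`. -/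
theorem erminus_critical_structure (P : GraphProp) (h1 : Hereditary P) (h2 : ClosedUnderK1 P)
    {V : Type} [Fintype V] [DecidableEq V] (G : SimpleGraph V) (x y : V) (he : G.Adj x y)
    (hgt : gammaP P (G.deleteEdges {s(x, y)}) < gammaP P G) :
    (∀ M : Set V, IsGammaSet P (G.deleteEdges {s(x, y)}) M → ¬ P M (G.induce M)) ∧
    (∀ M : Set V, IsGammaSet P (G.deleteEdges {s(x, y)}) M → x ∈ M ∧ y ∈ M) ∧
    (gammaP P (G.deleteEdges {s(x, y)}) ≤ gammaP P (delVert G x) ∧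
     gammaP P (G.deleteEdges {s(x, y)}) ≤ gammaP P (delVert G y)) ∧
    (gammaP P (delVert G x) = gammaP P (G.deleteEdges {s(x, y)}) →
      ∀ M : Set {w : V // w ≠ x}, IsGammaSet P (delVert G x) M → (⟨y, he.ne'⟩ : {w : V // w ≠ x}) ∉ M) := by
  have hswap : G.deleteEdges {s(y, x)} = G.deleteEdges {s(x, y)} := by rw [Sym2.eq_swap]
  have hgt' : gammaP P (G.deleteEdges {s(y, x)}) < gammaP P G := by rw [hswap]; exact hgt
  refine ⟨partA P G x y hgt, ?_, ⟨partC_x P h1 h2 G x y he hgt, ?_⟩, fun heq M hM => partD P h1 h2 G x y he hgt heq M hM⟩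
  · intro M hM
    refine ⟨partB_x P G x y hgt M hM, partB_x P G y x hgt' M ?_⟩
    rw [hswap]; exact hM
  · have := partC_x P h1 h2 G y x he.symm hgt'
    rwa [hswap] at this
end
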